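/- Let κ > 2 and let l ≥ 1 be an integer with κ ≠ l(l+1). Define I_l := ∫_{−1}^{1} P_l(y)/√(1 − y²) dy, λ_l := (l(l+1)κ)/((l(l+1) − κ)π)·I_l, and b(x) := P_l(x) + λ_l/(l(l+1)). Then for all x ∈ (−1,1): (1 − x²)b''(x) − 2x b'(x) + l(l+1)·b(x) = (κ/π)∫_{−1}^{1} b(y)/√(1 − y²) dy; that is, b solves the nonlocal Legendre-type equation with parameter α = −l(l+1). -/

import Mathlib

/-!
Rodrigues' formula gives the Legendre equation: `u = (x² - 1)ⁿ` satisfies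
`(x² - 1) u' = 2 n x u`, and differentiating this `n + 1` times shows that `u⁽ⁿ⁾`, hence `Pₙ`,
satisfies `(1 - x²) y'' - 2 x y' + n (n + 1) y = 0`. Adding a constant `c` to `Pₗ` therefore
turns the left-hand side into `l (l + 1) c`, while the right-hand side becomes
`(κ / π) (Iₗ + c π)` because `∫ 1 / √(1 - y²) = π`; the choice of `λₗ` is exactly the solution
of `l (l + 1) c = (κ / π) (Iₗ + c π)`.
-/

open Real

/-- The Legendre polynomial `P_n`, defined by the Rodrigues formula
`P_n = 1/(2ⁿ n!) · dⁿ/dxⁿ (x² − 1)ⁿ`. -/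
noncomputable def legendre (n : ℕ) : Polynomial ℝ :=
  ((1 : ℝ) / (2^n * n.factorial)) • (Polynomial.derivative^[n] ((Polynomial.X^2 - 1)^n))

open Polynomial MeasureTheory intervalIntegral

section Rodrigues

variable {R : Type*} [CommRing R]

theorem sq_sub_one_mul_derivative_pow (n : ℕ) :
    (X ^ 2 - 1 : R[X]) * derivative ((X ^ 2 - 1) ^ n) = 2 * (n : R[X]) * X * (X ^ 2 - 1) ^ n := by
  cases n with
  | zero => simp
  | succ n =>
    simp only [derivative_pow_succ, derivative_sub, derivative_X, derivative_one, map_add,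
      map_natCast, map_one, Nat.cast_add, Nat.cast_one]
    ring

theorem sq_sub_one_mul_iterate_derivative_add_two {u : R[X]} {n : ℕ}
    (hu : (X ^ 2 - 1) * derivative u = 2 * (n : R[X]) * X * u) (m : ℕ) :
    (X ^ 2 - 1) * derivative^[m + 2] u
      = 2 * ((n : R[X]) - (m : R[X]) - 1) * X * derivative^[m + 1] u
        + ((m : R[X]) + 1) * (2 * (n : R[X]) - (m : R[X])) * derivative^[m] u := by
  induction m with
  | zero =>
    have h := congrArg derivative hu
    simp only [derivative_mul, derivative_sub, derivative_X_sq, map_ofNat, derivative_one,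
      derivative_ofNat, derivative_natCast, derivative_X] at h
    simp only [Function.iterate_succ_apply', Function.iterate_zero_apply, Nat.cast_zero]
    linear_combination h
  | succ m ih =>
    simp only [Function.iterate_succ_apply'] at ih ⊢
    have h := congrArg derivative ih
    simp only [derivative_mul, derivative_sub, derivative_add, derivative_X_sq, map_ofNat,
      derivative_one, derivative_ofNat, derivative_natCast, derivative_X] at h
    push_cast
    linear_combination h

end Rodrigues

theorem legendre_ode (n : ℕ) :
    (1 - X ^ 2) * derivative (derivative (legendre n)) - 2 * X * derivative (legendre n)
      + (n : ℝ[X]) * ((n : ℝ[X]) + 1) * legendre n = 0 := by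
  have key :=
    sq_sub_one_mul_iterate_derivative_add_two (sq_sub_one_mul_derivative_pow (R := ℝ) n) n
  rw [legendre, smul_eq_C_mul, derivative_C_mul, derivative_C_mul,
    ← Function.iterate_succ_apply' derivative, ← Function.iterate_succ_apply' derivative]
  linear_combination (-C ((1 : ℝ) / (2 ^ n * n.factorial))) * key

theorem legendre_add_const_ode (n : ℕ) (c x : ℝ) :
    (1 - x ^ 2) * deriv (deriv fun y => (legendre n).eval y + c) x
      - 2 * x * deriv (fun y => (legendre n).eval y + c) x
      + n * (n + 1) * ((legendre n).eval x + c) = n * (n + 1) * c := by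
  have hb' : deriv (fun y => (legendre n).eval y + c) = fun y => (derivative (legendre n)).eval y :=
    funext fun y => (((legendre n).hasDerivAt y).add_const c).deriv
  have hode := congrArg (eval x) (legendre_ode n)
  simp only [eval_add, eval_sub, eval_mul, eval_pow, eval_X, eval_one, eval_ofNat, eval_natCast,
    eval_zero] at hode
  rw [hb', Polynomial.deriv]
  linear_combination hode

theorem intervalIntegrable_div_sqrt_one_sub_sq {g : ℝ → ℝ}
    (hg : ContinuousOn g (Set.Icc (-1) 1)) :
    IntervalIntegrable (fun y => g y / √(1 - y ^ 2)) volume (-1) 1 := by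
  rw [← Set.uIcc_of_le (by norm_num : (-1 : ℝ) ≤ 1)] at hg
  simpa only [div_eq_mul_inv, Real.sqrt_inv] using
    Chebyshev.intervalIntegrable_sqrt_one_sub_sq_inv.continuousOn_mul hg

theorem integral_one_div_sqrt_one_sub_sq : ∫ y in (-1 : ℝ)..1, 1 / √(1 - y ^ 2) = π := by
  have h := Chebyshev.integral_measureT_eq_integral_cos (f := fun _ => (1 : ℝ))
  rw [Chebyshev.integral_measureT] at h
  simpa [div_eq_mul_inv] using h

theorem integral_add_const_div_sqrt_one_sub_sq {g : ℝ → ℝ}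
    (hg : ContinuousOn g (Set.Icc (-1) 1)) (c : ℝ) :
    ∫ y in (-1 : ℝ)..1, (g y + c) / √(1 - y ^ 2)
      = (∫ y in (-1 : ℝ)..1, g y / √(1 - y ^ 2)) + c * π := by
  simp_rw [add_div]
  rw [integral_add (intervalIntegrable_div_sqrt_one_sub_sq hg)
    (intervalIntegrable_div_sqrt_one_sub_sq continuousOn_const)]
  simp_rw [div_eq_mul_one_div c, intervalIntegral.integral_const_mul,
    integral_one_div_sqrt_one_sub_sq]

theorem nonlocal_legendre_mode_solution_general (κ : ℝ) (l : ℕ) (hl : 1 ≤ l)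
    (hκl : κ ≠ (l:ℝ) * ((l:ℝ) + 1)) :
    let I : ℝ := ∫ y in (-1:ℝ)..1, (legendre l).eval y / Real.sqrt (1 - y^2)
    let lam : ℝ := ((l:ℝ) * ((l:ℝ) + 1) * κ) / (((l:ℝ) * ((l:ℝ) + 1) - κ) * π) * I
    let b : ℝ → ℝ := fun x => (legendre l).eval x + lam / ((l:ℝ) * ((l:ℝ) + 1))
    ∀ x ∈ Set.Ioo (-1:ℝ) 1,
      (1 - x^2) * deriv (deriv b) x - 2 * x * deriv b x + (l:ℝ) * ((l:ℝ) + 1) * b x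
        = (κ/π) * ∫ y in (-1:ℝ)..1, b y / Real.sqrt (1 - y^2) := by
  intro I lam b x _
  have hL : (l:ℝ) * ((l:ℝ) + 1) ≠ 0 := by positivity
  have hLκ : (l:ℝ) * ((l:ℝ) + 1) - κ ≠ 0 := sub_ne_zero.mpr hκl.symm
  rw [legendre_add_const_ode, integral_add_const_div_sqrt_one_sub_sq (legendre l).continuousOn]
  simp only [lam]
  field_simp
  ring

/-- For `κ > 2`, `l ≥ 1` with `κ ≠ l(l+1)`, setting
`I_l := ∫_{−1}^{1} P_l(y)/√(1 − y²) dy`, `λ_l := (l(l+1)κ)/((l(l+1) − κ)π)·I_l` and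
`b := P_l + λ_l/(l(l+1))`, the function `b` solves the nonlocal Legendre-type equation
with parameter `α = −l(l+1)`:
`(1 − x²)b'' − 2x b' + l(l+1)b = (κ/π)∫_{−1}^{1} b(y)/√(1 − y²) dy` on `(−1,1)`. -/
theorem nonlocal_legendre_mode_solution (κ : ℝ) (hκ : 2 < κ) (l : ℕ) (hl : 1 ≤ l)
    (hκl : κ ≠ (l:ℝ) * ((l:ℝ) + 1)) :
    let I : ℝ := ∫ y in (-1:ℝ)..1, (legendre l).eval y / Real.sqrt (1 - y^2)
    let lam : ℝ := ((l:ℝ) * ((l:ℝ) + 1) * κ) / (((l:ℝ) * ((l:ℝ) + 1) - κ) * π) * I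
    let b : ℝ → ℝ := fun x => (legendre l).eval x + lam / ((l:ℝ) * ((l:ℝ) + 1))
    ∀ x ∈ Set.Ioo (-1:ℝ) 1,
      (1 - x^2) * deriv (deriv b) x - 2 * x * deriv b x + (l:ℝ) * ((l:ℝ) + 1) * b x
        = (κ/π) * ∫ y in (-1:ℝ)..1, b y / Real.sqrt (1 - y^2) :=
  nonlocal_legendre_mode_solution_general κ l hl hκl
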